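/- arXiv:2310.06371 — 2 statements merged into one kernel-verified Lean document; each statement's English description precedes it below -/
import Mathlib

section
/- The Gaussian mechanism M(D) = f(D) + σ·Δ(f)·N(0, I), which adds i.i.d. Gaussian noise with standard deviation σ·Δ(f) to each coordinate of f(D), satisfies (1/(2σ²))-zCDP. -/
/-! The likelihood ratio of `N(m, v)` against `N(m', v)` is
`x ↦ exp ((m - m') (2x - m - m') / (2v))`, so its `α`-th moment under `N(m', v)` is a value of
the Gaussian moment generating function, namely `exp (α (α - 1) (m - m')² / (2v))`. The
Radon–Nikodym derivative of a product measure is the product of the coordinate derivatives, so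
these moments multiply, and the Rényi divergence between the outputs on neighbouring datasets is
`α ‖f d - f d'‖² / (2σ²Δ²) ≤ α / (2σ²)`. -/

open MeasureTheory ProbabilityTheory

/-- Rényi divergence of order `α` between two measures. -/
noncomputable def renyiDiv {Ω : Type*} [MeasurableSpace Ω] (α : ℝ) (μ ν : Measure Ω) : ℝ :=
  (α - 1)⁻¹ * Real.log (∫ x, ((μ.rnDeriv ν x).toReal) ^ α ∂ν)

/-- `ρ`-zCDP. -/
def zCDP {D Ω : Type*} [MeasurableSpace Ω] (neighbor : D → D → Prop)
    (M : D → Measure Ω) (ρ : ℝ) : Prop :=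
  ∀ d d' : D, neighbor d d' → ∀ α : ℝ, 1 < α → renyiDiv α (M d) (M d') ≤ ρ * α

open Real
open scoped ENNReal NNReal

namespace MeasureTheory

variable {ι : Type*} [Fintype ι] {E : Type*} [MeasurableSpace E]

theorem lintegral_fin_nat_prod_eq_prod {n : ℕ} {μ : Fin n → Measure E}
    [∀ i, SigmaFinite (μ i)] {g : Fin n → E → ℝ≥0∞} (hg : ∀ i, Measurable (g i)) :
    ∫⁻ x, ∏ i, g i (x i) ∂Measure.pi μ = ∏ i, ∫⁻ x, g i x ∂μ i := by
  induction n with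
  | zero => simp
  | succ n ih =>
    calc _ = ∫⁻ x : E × (Fin n → E), g 0 x.1 * ∏ i : Fin n, g (Fin.succ i) (x.2 i)
            ∂(μ 0).prod (Measure.pi fun i => μ i.succ) := by
          rw [← ((measurePreserving_piFinSuccAbove μ 0).symm).lintegral_comp_emb
            (MeasurableEquiv.measurableEmbedding _)]
          simp_rw [MeasurableEquiv.piFinSuccAbove_symm_apply, Fin.insertNthEquiv,
            Fin.prod_univ_succ, Fin.insertNth_zero, Equiv.coe_fn_mk, Fin.cons_succ,
            Fin.zero_succAbove, cast_eq, Fin.cons_zero]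
      _ = (∫⁻ x, g 0 x ∂μ 0) * ∏ i : Fin n, ∫⁻ x, g i.succ x ∂μ i.succ := by
          rw [← ih fun i => hg i.succ]
          exact lintegral_prod_mul (hg 0).aemeasurable
            (Finset.measurable_prod _ fun (i : Fin n) _ =>
              (hg i.succ).comp (measurable_pi_apply i)).aemeasurable
      _ = _ := (Fin.prod_univ_succ fun i => ∫⁻ x, g i x ∂μ i).symm

theorem lintegral_fintype_prod_eq_prod {μ : ι → Measure E} [∀ i, SigmaFinite (μ i)]
    {g : ι → E → ℝ≥0∞} (hg : ∀ i, Measurable (g i)) :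
    ∫⁻ x, ∏ i, g i (x i) ∂Measure.pi μ = ∏ i, ∫⁻ x, g i x ∂μ i := by
  let e := (Fintype.equivFin ι).symm
  rw [← (measurePreserving_piCongrLeft _ e).lintegral_comp_emb
    (MeasurableEquiv.measurableEmbedding _)]
  simp_rw [← e.prod_comp, MeasurableEquiv.coe_piCongrLeft, Equiv.piCongrLeft_apply_apply]
  exact lintegral_fin_nat_prod_eq_prod fun i => hg (e i)

theorem Measure.pi_withDensity {μ : ι → Measure E} [∀ i, SigmaFinite (μ i)]
    {g : ι → E → ℝ≥0∞} (hg : ∀ i, Measurable (g i))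
    [∀ i, SigmaFinite ((μ i).withDensity (g i))] :
    Measure.pi (fun i => (μ i).withDensity (g i))
      = (Measure.pi μ).withDensity fun x => ∏ i, g i (x i) := by
  refine Measure.pi_eq fun s hs => ?_
  rw [withDensity_apply _ (MeasurableSet.univ_pi hs), Measure.restrict_pi_pi,
    lintegral_fintype_prod_eq_prod hg]
  exact Finset.prod_congr rfl fun i _ => (withDensity_apply _ (hs i)).symm

theorem Measure.rnDeriv_pi {μ ν : ι → Measure E} [∀ i, SigmaFinite (μ i)]
    [∀ i, SigmaFinite (ν i)] (hμν : ∀ i, μ i ≪ ν i) :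
    (Measure.pi μ).rnDeriv (Measure.pi ν)
      =ᵐ[Measure.pi ν] fun x => ∏ i, (μ i).rnDeriv (ν i) (x i) := by
  have hμ : ∀ i, (ν i).withDensity ((μ i).rnDeriv (ν i)) = μ i :=
    fun i => Measure.withDensity_rnDeriv_eq _ _ (hμν i)
  have : ∀ i, SigmaFinite ((ν i).withDensity ((μ i).rnDeriv (ν i))) := fun i => by
    rw [hμ i]; infer_instance
  have hpi : Measure.pi μ
      = (Measure.pi ν).withDensity fun x => ∏ i, (μ i).rnDeriv (ν i) (x i) := by
    rw [← Measure.pi_withDensity fun i => Measure.measurable_rnDeriv _ _]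
    simp_rw [hμ]
  rw [hpi]
  exact Measure.rnDeriv_withDensity _ (Finset.measurable_prod _ fun i _ =>
    (Measure.measurable_rnDeriv _ _).comp (measurable_pi_apply i))

theorem integral_rnDeriv_pi_rpow {μ ν : ι → Measure E} [∀ i, SigmaFinite (μ i)]
    [∀ i, SigmaFinite (ν i)] (hμν : ∀ i, μ i ≪ ν i) (α : ℝ) :
    ∫ x, ((Measure.pi μ).rnDeriv (Measure.pi ν) x).toReal ^ α ∂Measure.pi ν
      = ∏ i, ∫ x, ((μ i).rnDeriv (ν i) x).toReal ^ α ∂ν i := by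
  rw [← integral_fintype_prod_eq_prod]
  refine integral_congr_ae ?_
  filter_upwards [Measure.rnDeriv_pi hμν] with x hx
  rw [hx, ENNReal.toReal_prod, Real.finsetProd_rpow _ _ fun i _ => ENNReal.toReal_nonneg]

end MeasureTheory

namespace ProbabilityTheory

lemma gaussianPDFReal_eq_mul_exp (m m' : ℝ) (v : ℝ≥0) (x : ℝ) :
    gaussianPDFReal m v x
      = gaussianPDFReal m' v x * exp ((m - m') * (2 * x - m - m') / (2 * v)) := by
  rw [gaussianPDFReal, gaussianPDFReal, mul_assoc (√(2 * π * v))⁻¹, ← exp_add]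
  ring_nf

lemma gaussianReal_eq_withDensity (m m' : ℝ) {v : ℝ≥0} (hv : v ≠ 0) :
    gaussianReal m v = (gaussianReal m' v).withDensity
      fun x => ENNReal.ofReal (exp ((m - m') * (2 * x - m - m') / (2 * v))) := by
  rw [gaussianReal_of_var_ne_zero _ hv, gaussianReal_of_var_ne_zero _ hv,
    ← withDensity_mul _ (measurable_gaussianPDF _ _) (by fun_prop)]
  congr 1
  ext x
  rw [Pi.mul_apply, gaussianPDF, gaussianPDF, ← ENNReal.ofReal_mul (gaussianPDFReal_nonneg _ _ _),
    ← gaussianPDFReal_eq_mul_exp]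

lemma integral_exp_rpow_gaussianReal (m m' : ℝ) {v : ℝ≥0} (hv : v ≠ 0) (α : ℝ) :
    ∫ x, exp ((m - m') * (2 * x - m - m') / (2 * v)) ^ α ∂gaussianReal m' v
      = exp (α * (α - 1) * (m - m') ^ 2 / (2 * v)) := by
  have hv' : (v : ℝ) ≠ 0 := NNReal.coe_ne_zero.mpr hv
  have hsplit : ∀ x, exp ((m - m') * (2 * x - m - m') / (2 * v)) ^ α
      = exp (-α * (m - m') * (m + m') / (2 * v)) * exp (α * (m - m') / v * x) := by
    intro x
    rw [← exp_mul, ← exp_add]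
    congr 1
    field_simp
    ring
  have hmgf := congrFun (mgf_fun_id_gaussianReal (μ := m') (v := v)) (α * (m - m') / v)
  simp_rw [hsplit, integral_const_mul]
  rw [mgf] at hmgf
  rw [hmgf, ← exp_add]
  congr 1
  field_simp
  ring

lemma integral_rnDeriv_gaussianReal_rpow (m m' : ℝ) {v : ℝ≥0} (hv : v ≠ 0) (α : ℝ) :
    ∫ x, ((gaussianReal m v).rnDeriv (gaussianReal m' v) x).toReal ^ α ∂gaussianReal m' v
      = exp (α * (α - 1) * (m - m') ^ 2 / (2 * v)) := by
  have hrn : (gaussianReal m v).rnDeriv (gaussianReal m' v) =ᵐ[gaussianReal m' v]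
      fun x => ENNReal.ofReal (exp ((m - m') * (2 * x - m - m') / (2 * v))) := by
    rw [gaussianReal_eq_withDensity m m' hv]
    exact Measure.rnDeriv_withDensity _ (by fun_prop)
  rw [← integral_exp_rpow_gaussianReal m m' hv α]
  refine integral_congr_ae ?_
  filter_upwards [hrn] with x hx
  rw [hx, ENNReal.toReal_ofReal (exp_pos _).le]

end ProbabilityTheory

lemma renyiDiv_self {Ω : Type*} [MeasurableSpace Ω] (α : ℝ) (μ : Measure Ω)
    [IsProbabilityMeasure μ] : renyiDiv α μ μ = 0 := by
  rw [renyiDiv, integral_congr_ae ((Measure.rnDeriv_self μ).mono fun x hx => by rw [hx])]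
  simp

lemma renyiDiv_pi_gaussianReal {ι : Type*} [Fintype ι] (m m' : ι → ℝ) {v : ℝ≥0}
    (hv : v ≠ 0) {α : ℝ} (hα : α ≠ 1) :
    renyiDiv α (Measure.pi fun i => gaussianReal (m i) v)
        (Measure.pi fun i => gaussianReal (m' i) v)
      = α * (∑ i, (m i - m' i) ^ 2) / (2 * v) := by
  have hac : ∀ i, gaussianReal (m i) v ≪ gaussianReal (m' i) v := fun i =>
    (gaussianReal_absolutelyContinuous _ hv).trans (gaussianReal_absolutelyContinuous' _ hv)
  have hα' : α - 1 ≠ 0 := sub_ne_zero.mpr hα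
  rw [renyiDiv, integral_rnDeriv_pi_rpow hac]
  simp_rw [integral_rnDeriv_gaussianReal_rpow _ _ hv, ← exp_sum, log_exp, ← Finset.sum_div,
    ← Finset.mul_sum]
  field_simp

theorem gaussianMechanism_zCDP_general
    {D : Type*} (neighbor : D → D → Prop)
    (h : ℕ) (f : D → Fin h → ℝ) (Δ σ : ℝ) (hσ : 0 < σ)
    (hsens : ∀ d d' : D, neighbor d d' →
      Real.sqrt (∑ i, (f d i - f d' i) ^ 2) ≤ Δ)
    (M : D → Measure (Fin h → ℝ))
    (hM : ∀ d, M d = Measure.pi (fun i => gaussianReal (f d i) (((σ * Δ) ^ 2).toNNReal))) :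
    zCDP neighbor M (1 / (2 * σ ^ 2)) := by
  intro d d' hnb α hα
  have hsq : ∑ i, (f d i - f d' i) ^ 2 ≤ Δ ^ 2 := (Real.sqrt_le_iff.mp (hsens d d' hnb)).2
  rw [hM d, hM d']
  rcases eq_or_ne Δ 0 with rfl | hΔ
  · have hfd : f d = f d' := funext fun i => by
      have := Finset.single_le_sum (fun j _ => sq_nonneg (f d j - f d' j)) (Finset.mem_univ i)
      nlinarith
    rw [hfd, renyiDiv_self]
    positivity
  · have hv : ((σ * Δ) ^ 2).toNNReal ≠ 0 := (Real.toNNReal_pos.mpr (by positivity)).ne'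
    rw [renyiDiv_pi_gaussianReal _ _ hv hα.ne', Real.coe_toNNReal _ (sq_nonneg _),
      show 1 / (2 * σ ^ 2) * α = α * Δ ^ 2 / (2 * (σ * Δ) ^ 2) by field_simp]
    gcongr

/-- The Gaussian mechanism `M(D) = f(D) + σ·Δ·N(0, I)`, adding i.i.d. Gaussian noise of
standard deviation `σ·Δ(f)` to each of the `h` coordinates of `f(D)`, where `Δ` bounds the
ℓ2-sensitivity of `f`, satisfies `(1/(2σ²))`-zCDP. -/
theorem gaussianMechanism_zCDP
    {D : Type*} (neighbor : D → D → Prop)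
    (h : ℕ) (f : D → Fin h → ℝ) (Δ σ : ℝ) (hΔ : 0 ≤ Δ) (hσ : 0 < σ)
    (hsens : ∀ d d' : D, neighbor d d' →
      Real.sqrt (∑ i, (f d i - f d' i) ^ 2) ≤ Δ)
    (M : D → Measure (Fin h → ℝ))
    (hM : ∀ d, M d = Measure.pi (fun i => gaussianReal (f d i) (((σ * Δ) ^ 2).toNNReal))) :
    zCDP neighbor M (1 / (2 * σ ^ 2)) :=
  gaussianMechanism_zCDP_general neighbor h f Δ σ hσ hsens M hM
end

section
/- Let each marginal wᵢ in a set of one-way marginals have cᵢ cells, and allocate privacy budget ρᵢ = cᵢ^{2/3}/(Σⱼ cⱼ^{2/3}) · ρ_total to marginal wᵢ. Then the total expected ℓ1 noise error Σᵢ cᵢ/√(π·ρᵢ) equals (Σⱼ cⱼ^{2/3})^{3/2}/√(π·ρ_total), and this allocation minimizes Σᵢ cᵢ/√(π·ρᵢ) subject to Σᵢ ρᵢ = ρ_total and ρᵢ > 0. -/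
/-!
Writing `S = ∑ⱼ cⱼ^{2/3}`, the split `ρᵢ = cᵢ^{2/3} ρ_total / S` makes every term
`cᵢ / √ρᵢ = cᵢ^{2/3} √S / √ρ_total`, so the total is `S^{3/2} / √ρ_total`. For an arbitrary
positive split, Hölder's inequality with exponents `3/2` and `3` applied to
`cᵢ^{2/3} = (cᵢ / √ρᵢ)^{2/3} · ρᵢ^{1/3}` gives `S ≤ (∑ᵢ cᵢ / √ρᵢ)^{2/3} ρ_total^{1/3}`,
which is the same bound.
-/

open Real Finset

lemma div_sqrt_rpow_two_thirds_div_mul {a S t : ℝ} (ha : 0 ≤ a) (ht : 0 ≤ t) :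
    a / √(a ^ ((2 : ℝ) / 3) / S * t) = a ^ ((2 : ℝ) / 3) * (√S / √t) := by
  have hsqrt : √(a ^ ((2 : ℝ) / 3)) = a ^ ((1 : ℝ) / 3) := by
    rw [sqrt_eq_rpow, ← rpow_mul ha]
    norm_num
  have hdiv : a / a ^ ((1 : ℝ) / 3) = a ^ ((2 : ℝ) / 3) := by
    rw [show (2 : ℝ) / 3 = 1 - 1 / 3 by norm_num, rpow_sub' ha (by norm_num), rpow_one]
  rw [sqrt_mul' _ ht, sqrt_div (rpow_nonneg ha _), hsqrt, ← hdiv]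
  simp only [div_eq_mul_inv, mul_inv, inv_inv]
  ring

section BudgetAllocation

variable {ι : Type*} (s : Finset ι) (a x : ι → ℝ)

lemma sum_div_sqrt_mul_left {u : ℝ} (hu : 0 ≤ u) :
    ∑ i ∈ s, a i / √(u * x i) = (∑ i ∈ s, a i / √(x i)) / √u := by
  rw [sum_div]
  refine sum_congr rfl fun i _ => ?_
  rw [sqrt_mul hu, div_div, mul_comm]

lemma sum_div_sqrt_eq_of_eq_rpow_two_thirds {t : ℝ} (ha : ∀ i ∈ s, 0 ≤ a i) (ht : 0 ≤ t)
    (hx : ∀ i ∈ s, x i = a i ^ ((2 : ℝ) / 3) / (∑ j ∈ s, a j ^ ((2 : ℝ) / 3)) * t) :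
    ∑ i ∈ s, a i / √(x i) = (∑ j ∈ s, a j ^ ((2 : ℝ) / 3)) ^ ((3 : ℝ) / 2) / √t := by
  set S := ∑ j ∈ s, a j ^ ((2 : ℝ) / 3)
  have hS : 0 ≤ S := sum_nonneg fun i hi => rpow_nonneg (ha i hi) _
  have hS_rpow : S ^ ((3 : ℝ) / 2) = S * √S := by
    rw [sqrt_eq_rpow, ← rpow_one_add' hS (by norm_num)]
    norm_num
  rw [hS_rpow, mul_div_assoc, sum_mul]
  refine sum_congr rfl fun i hi => ?_
  rw [hx i hi, div_sqrt_rpow_two_thirds_div_mul (ha i hi) ht]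

lemma sum_rpow_two_thirds_le (ha : ∀ i ∈ s, 0 ≤ a i) (hx : ∀ i ∈ s, 0 < x i) :
    ∑ i ∈ s, a i ^ ((2 : ℝ) / 3) ≤
      (∑ i ∈ s, a i / √(x i)) ^ ((2 : ℝ) / 3) * (∑ i ∈ s, x i) ^ ((1 : ℝ) / 3) := by
  have hpq : HolderConjugate ((3 : ℝ) / 2) 3 := holderConjugate_iff.2 ⟨by norm_num, by norm_num⟩
  have hholder := inner_le_Lp_mul_Lq_of_nonneg s hpq
    (f := fun i => (a i / √(x i)) ^ ((2 : ℝ) / 3)) (g := fun i => x i ^ ((1 : ℝ) / 3))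
    (fun i hi => rpow_nonneg (div_nonneg (ha i hi) (sqrt_nonneg _)) _)
    (fun i hi => rpow_nonneg (hx i hi).le _)
  have hprod : ∀ i ∈ s, (a i / √(x i)) ^ ((2 : ℝ) / 3) * x i ^ ((1 : ℝ) / 3) =
      a i ^ ((2 : ℝ) / 3) := fun i hi => by
    rw [div_rpow (ha i hi) (sqrt_nonneg _), sqrt_eq_rpow, ← rpow_mul (hx i hi).le,
      show (1 : ℝ) / 2 * (2 / 3) = 1 / 3 by norm_num,
      div_mul_cancel₀ _ (rpow_pos_of_pos (hx i hi) _).ne']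
  have hleft : ∀ i ∈ s, ((a i / √(x i)) ^ ((2 : ℝ) / 3)) ^ ((3 : ℝ) / 2) = a i / √(x i) :=
    fun i hi => by
      rw [← rpow_mul (div_nonneg (ha i hi) (sqrt_nonneg _))]
      norm_num
  have hright : ∀ i ∈ s, (x i ^ ((1 : ℝ) / 3)) ^ (3 : ℝ) = x i := fun i hi => by
    rw [← rpow_mul (hx i hi).le]
    norm_num
  rwa [sum_congr rfl hprod, sum_congr rfl hleft, sum_congr rfl hright,
    show (1 : ℝ) / (3 / 2) = 2 / 3 by norm_num] at hholder

lemma rpow_sum_rpow_two_thirds_le (ha : ∀ i ∈ s, 0 ≤ a i) (hx : ∀ i ∈ s, 0 < x i) :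
    (∑ i ∈ s, a i ^ ((2 : ℝ) / 3)) ^ ((3 : ℝ) / 2) ≤
      (∑ i ∈ s, a i / √(x i)) * √(∑ i ∈ s, x i) := by
  have hT : 0 ≤ ∑ i ∈ s, a i / √(x i) :=
    sum_nonneg fun i hi => div_nonneg (ha i hi) (sqrt_nonneg _)
  have hX : 0 ≤ ∑ i ∈ s, x i := sum_nonneg fun i hi => (hx i hi).le
  calc (∑ i ∈ s, a i ^ ((2 : ℝ) / 3)) ^ ((3 : ℝ) / 2)
      ≤ ((∑ i ∈ s, a i / √(x i)) ^ ((2 : ℝ) / 3) *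
          (∑ i ∈ s, x i) ^ ((1 : ℝ) / 3)) ^ ((3 : ℝ) / 2) := by
        gcongr
        · exact sum_nonneg fun i hi => rpow_nonneg (ha i hi) _
        · exact sum_rpow_two_thirds_le s a x ha hx
    _ = (∑ i ∈ s, a i / √(x i)) * √(∑ i ∈ s, x i) := by
        rw [mul_rpow (rpow_nonneg hT _) (rpow_nonneg hX _), ← rpow_mul hT, ← rpow_mul hX,
          sqrt_eq_rpow]
        norm_num

end BudgetAllocation

/-- The PrivSyn budget split `ρᵢ = cᵢ^{2/3}/(Σⱼ cⱼ^{2/3})·ρ_total` gives total expected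
ℓ1 noise error `Σᵢ cᵢ/√(π·ρᵢ) = (Σⱼ cⱼ^{2/3})^{3/2}/√(π·ρ_total)`, and this allocation
minimizes `Σᵢ cᵢ/√(π·ρᵢ)` over all positive allocations summing to `ρ_total`. -/
theorem privsyn_budget_allocation_optimal
    (k : ℕ) (c : Fin k → ℝ) (hc : ∀ i, 0 < c i)
    (ρtot : ℝ) (hρtot : 0 < ρtot)
    (ρ : Fin k → ℝ)
    (hρ : ∀ i, ρ i = c i ^ ((2 : ℝ) / 3) / (∑ j, c j ^ ((2 : ℝ) / 3)) * ρtot) :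
    (∑ i, c i / Real.sqrt (π * ρ i) =
      (∑ j, c j ^ ((2 : ℝ) / 3)) ^ ((3 : ℝ) / 2) / Real.sqrt (π * ρtot)) ∧
    (∀ ρ' : Fin k → ℝ, (∀ i, 0 < ρ' i) → (∑ i, ρ' i) = ρtot →
      ∑ i, c i / Real.sqrt (π * ρ i) ≤ ∑ i, c i / Real.sqrt (π * ρ' i)) := by
  have hc' : ∀ i ∈ univ, 0 ≤ c i := fun i _ => (hc i).le
  have hcost : ∑ i, c i / √(π * ρ i) =
      (∑ j, c j ^ ((2 : ℝ) / 3)) ^ ((3 : ℝ) / 2) / √(π * ρtot) := by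
    rw [sum_div_sqrt_mul_left _ _ _ pi_nonneg,
      sum_div_sqrt_eq_of_eq_rpow_two_thirds _ _ _ hc' hρtot.le fun i _ => hρ i,
      sqrt_mul pi_nonneg, div_div, mul_comm (√ρtot)]
  refine ⟨hcost, fun ρ' hρ' hsum => ?_⟩
  rw [hcost, sum_div_sqrt_mul_left _ _ _ pi_nonneg, sqrt_mul pi_nonneg, mul_comm, ← div_div]
  gcongr
  rw [div_le_iff₀ (sqrt_pos.2 hρtot), ← hsum]
  exact rpow_sum_rpow_two_thirds_le _ _ _ hc' fun i _ => hρ' i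
end
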